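/- For the circle 𝕋 with total length 2π and n ≥ 1, the longest arc determined on 𝕋 by the set of directions { k/‖k‖₂ : k ∈ ℤ², max(|k₁|,|k₂|) = n } has arclength equal to arcsin(1/√(n²+1)), and arcsin(1/√(n²+1)) < 1/n. -/

import Mathlib

open Real Set

/-!
The directions of `k` with `|k|_max = n` in the octant `0 ≤ k₂ ≤ k₁` are `(n, j)`, `0 ≤ j ≤ n`, at
angles `arctan (j / n)`; the other octants are their images under `θ ↦ θ + π/2` and
`θ ↦ π/2 - θ`. By subadditivity of `arctan` on `[0, ∞)`, consecutive angles are at most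
`arctan (1 / n)` apart, and this bound is attained between `(n, 0)` and `(n, 1)`: a direction
strictly in between would have slope `k₂ / k₁ ∈ (0, 1/n)`, impossible for `|k₁| ≤ n`, `k₂ ≠ 0`.
Finally `arcsin (1 / √(n² + 1)) = arctan (1 / n) < 1 / n`.
-/

namespace Real

theorem arctan_add_le {x y : ℝ} (hx : 0 ≤ x) (hy : 0 ≤ y) :
    arctan (x + y) ≤ arctan x + arctan y := by
  rcases lt_or_ge (x * y) 1 with hxy | hxy
  · rw [arctan_add hxy, arctan_le_arctan_iff, le_div_iff₀ (by linarith)]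
    nlinarith [mul_nonneg (mul_nonneg hx hy) (add_nonneg hx hy)]
  · -- then `arctan y ≥ arctan x⁻¹ = π/2 - arctan x`
    have hx0 : 0 < x := hx.lt_of_ne (by rintro rfl; simp at hxy; linarith)
    have hinv : arctan x⁻¹ ≤ arctan y :=
      arctan_le_arctan_iff.2 ((inv_le_iff_one_le_mul₀ hx0).2 (by rwa [mul_comm]))
    rw [arctan_inv_of_pos hx0] at hinv
    linarith [arctan_lt_pi_div_two (x + y)]

theorem sqrt_one_add_div_sq_mul {a : ℝ} (ha : 0 < a) (b : ℝ) :
    √(1 + (b / a) ^ 2) * a = √(a ^ 2 + b ^ 2) := by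
  rw [← sqrt_sq ha.le, ← sqrt_mul (by positivity), sqrt_sq ha.le]
  congr 1
  field_simp

theorem cos_arctan_div {a : ℝ} (ha : 0 < a) (b : ℝ) :
    cos (arctan (b / a)) = a / √(a ^ 2 + b ^ 2) := by
  rw [cos_arctan, ← sqrt_one_add_div_sq_mul ha, eq_div_iff (by positivity)]
  field_simp

theorem sin_arctan_div {a : ℝ} (ha : 0 < a) (b : ℝ) :
    sin (arctan (b / a)) = b / √(a ^ 2 + b ^ 2) := by
  rw [sin_arctan, ← sqrt_one_add_div_sq_mul ha, div_div, mul_comm]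

theorem arcsin_one_div_sqrt_sq_add_one {a : ℝ} (ha : 0 < a) :
    arcsin (1 / √(a ^ 2 + 1)) = arctan (1 / a) := by
  have h := sin_arctan_div ha 1
  rw [one_pow] at h
  rw [← h]
  exact arcsin_sin (neg_pi_div_two_lt_arctan _).le (arctan_lt_pi_div_two _).le

theorem arctan_lt_self {x : ℝ} (hx : 0 < x) : arctan x < x := by
  simpa only [tan_arctan] using lt_tan (arctan_pos.2 hx) (arctan_lt_pi_div_two x)

end Real

theorem exists_nat_div_le_le_succ_div {n : ℕ} (hn : 0 < n) {t : ℝ} (ht₀ : 0 ≤ t) (ht₁ : t ≤ 1) :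
    ∃ j < n, (j : ℝ) / n ≤ t ∧ t ≤ (j + 1) / n := by
  have hn' : (0 : ℝ) < n := Nat.cast_pos.2 hn
  refine ⟨min ⌊n * t⌋₊ (n - 1), by omega, ?_, ?_⟩
  · rw [div_le_iff₀ hn', mul_comm]
    exact (Nat.cast_le.2 (min_le_left _ _)).trans (Nat.floor_le (by positivity))
  · rw [le_div_iff₀ hn', mul_comm]
    rcases min_choice ⌊n * t⌋₊ (n - 1) with h | h <;> rw [h]
    · exact (Nat.lt_floor_add_one _).le
    · rw [Nat.cast_sub hn, Nat.cast_one, sub_add_cancel]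
      nlinarith

theorem one_div_le_abs_div_of_abs_le {a b : ℤ} {n : ℕ} (ha : |a| ≤ n) (ha₀ : a ≠ 0)
    (hb₀ : b ≠ 0) : 1 / (n : ℝ) ≤ |(b : ℝ) / a| := by
  have ha' : |(a : ℝ)| ≤ n := by exact_mod_cast ha
  have hb' : 1 ≤ |(b : ℝ)| := by exact_mod_cast Int.one_le_abs hb₀
  rw [abs_div]
  calc 1 / (n : ℝ) ≤ 1 / |(a : ℝ)| :=
        one_div_le_one_div_of_le (abs_pos.2 (Int.cast_ne_zero.2 ha₀)) ha'
    _ ≤ |(b : ℝ)| / |(a : ℝ)| := div_le_div_of_nonneg_right hb' (abs_nonneg _)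

def IsDirectionAngle (k : ℤ × ℤ) (θ : ℝ) : Prop :=
  cos θ = k.1 / √((k.1 : ℝ) ^ 2 + (k.2 : ℝ) ^ 2) ∧
    sin θ = k.2 / √((k.1 : ℝ) ^ 2 + (k.2 : ℝ) ^ 2)

namespace IsDirectionAngle

variable {k : ℤ × ℤ} {θ : ℝ}

theorem add_pi_div_two (h : IsDirectionAngle k θ) : IsDirectionAngle (-k.2, k.1) (θ + π / 2) := by
  obtain ⟨hc, hs⟩ := h
  simp only [IsDirectionAngle, cos_add_pi_div_two, sin_add_pi_div_two, hc, hs, Int.cast_neg,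
    neg_sq, add_comm ((k.2 : ℝ) ^ 2), neg_div, and_self]

theorem of_add_pi_div_two (h : IsDirectionAngle k (θ + π / 2)) :
    IsDirectionAngle (k.2, -k.1) θ := by
  obtain ⟨hc, hs⟩ := h
  rw [cos_add_pi_div_two, neg_eq_iff_eq_neg] at hc
  rw [sin_add_pi_div_two] at hs
  simp only [IsDirectionAngle, hc, hs, Int.cast_neg, neg_sq, add_comm ((k.1 : ℝ) ^ 2), neg_div,
    and_self]

theorem pi_div_two_sub (h : IsDirectionAngle k θ) : IsDirectionAngle (k.2, k.1) (π / 2 - θ) := by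
  obtain ⟨hc, hs⟩ := h
  simp only [IsDirectionAngle, cos_pi_div_two_sub, sin_pi_div_two_sub, hc, hs,
    add_comm ((k.2 : ℝ) ^ 2), and_self]

theorem sqrt_ne_zero (h : IsDirectionAngle k θ) : √((k.1 : ℝ) ^ 2 + (k.2 : ℝ) ^ 2) ≠ 0 := by
  intro h₀
  have := sin_sq_add_cos_sq θ
  rw [h.1, h.2, h₀] at this
  simp at this

theorem tan_eq (h : IsDirectionAngle k θ) : tan θ = k.2 / k.1 := by
  rw [tan_eq_sin_div_cos, h.1, h.2, div_div_div_cancel_right₀ h.sqrt_ne_zero]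

end IsDirectionAngle

theorem isDirectionAngle_arctan_div {a : ℤ} (ha : 0 < a) (b : ℤ) :
    IsDirectionAngle (a, b) (arctan (b / a)) :=
  ⟨cos_arctan_div (Int.cast_pos.2 ha) _, sin_arctan_div (Int.cast_pos.2 ha) _⟩

def directionAngles (n : ℕ) : Set ℝ :=
  {θ | ∃ k : ℤ × ℤ, max |k.1| |k.2| = (n : ℤ) ∧ IsDirectionAngle k θ}

section directionAngles

variable {n : ℕ}

theorem directionAngles_periodic (n : ℕ) :
    Function.Periodic (· ∈ directionAngles n) (π / 2) := fun θ =>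
  propext ⟨fun ⟨k, hk, h⟩ => ⟨(k.2, -k.1), by rwa [abs_neg, max_comm], h.of_add_pi_div_two⟩,
    fun ⟨k, hk, h⟩ => ⟨(-k.2, k.1), by rwa [abs_neg, max_comm], h.add_pi_div_two⟩⟩

theorem pi_div_two_sub_mem_directionAngles {θ : ℝ} (hθ : θ ∈ directionAngles n) :
    π / 2 - θ ∈ directionAngles n :=
  let ⟨k, hk, h⟩ := hθ
  ⟨(k.2, k.1), by rwa [max_comm], h.pi_div_two_sub⟩

theorem arctan_div_mem_directionAngles (hn : 0 < n) {j : ℕ} (hj : j ≤ n) :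
    arctan (j / n) ∈ directionAngles n := by
  refine ⟨(n, j), ?_, by
    simpa only [Int.cast_natCast] using isDirectionAngle_arctan_div (Int.natCast_pos.2 hn) j⟩
  simp only [Nat.abs_cast]
  omega

theorem notMem_directionAngles_of_mem_Ioo {ψ : ℝ} (hψ : ψ ∈ Ioo 0 (arctan (1 / n))) :
    ψ ∉ directionAngles n := by
  rintro ⟨k, hk, h⟩
  have hψ' : arctan (tan ψ) = ψ :=
    arctan_tan (by linarith [hψ.1, pi_pos]) (hψ.2.trans (arctan_lt_pi_div_two _))
  have hpos : 0 < tan ψ := arctan_pos.1 (by rw [hψ']; exact hψ.1)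
  have hlt : tan ψ < 1 / n := arctan_lt_arctan_iff.1 (by rw [hψ']; exact hψ.2)
  rw [h.tan_eq] at hpos hlt
  have hk₁ : k.1 ≠ 0 := by rintro h₁; simp [h₁] at hpos
  have hk₂ : k.2 ≠ 0 := by rintro h₂; simp [h₂] at hpos
  have := one_div_le_abs_div_of_abs_le ((le_max_left _ _).trans_eq hk) hk₁ hk₂
  rw [abs_of_pos hpos] at this
  linarith

theorem exists_directionAngles_bracket_of_mem_Icc_pi_div_four (hn : 0 < n) {θ : ℝ}
    (hθ : θ ∈ Icc 0 (π / 4)) :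
    ∃ α ∈ directionAngles n, ∃ β ∈ directionAngles n,
      α ≤ θ ∧ θ ≤ β ∧ β - α ≤ arctan (1 / n) := by
  have hθ' : arctan (tan θ) = θ :=
    arctan_tan (by linarith [hθ.1, pi_pos]) (by linarith [hθ.2, pi_pos])
  have ht₀ : 0 ≤ tan θ := arctan_nonneg.1 (by rw [hθ']; exact hθ.1)
  have ht₁ : tan θ ≤ 1 := arctan_le_arctan_iff.1 (by rw [hθ', arctan_one]; exact hθ.2)
  obtain ⟨j, hjn, hj, hj'⟩ := exists_nat_div_le_le_succ_div hn ht₀ ht₁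
  refine ⟨arctan (j / n), arctan_div_mem_directionAngles hn hjn.le, arctan ((j + 1) / n),
    by exact_mod_cast arctan_div_mem_directionAngles hn (Nat.succ_le_of_lt hjn), ?_, ?_, ?_⟩
  · rw [← hθ']
    exact arctan_le_arctan_iff.2 hj
  · rw [← hθ']
    exact arctan_le_arctan_iff.2 hj'
  · rw [add_div]
    linarith [arctan_add_le (x := j / n) (y := 1 / n) (by positivity) (by positivity)]

theorem exists_directionAngles_bracket_of_mem_Icc_pi_div_two (hn : 0 < n) {θ : ℝ}
    (hθ : θ ∈ Icc 0 (π / 2)) :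
    ∃ α ∈ directionAngles n, ∃ β ∈ directionAngles n,
      α ≤ θ ∧ θ ≤ β ∧ β - α ≤ arctan (1 / n) := by
  rcases le_total θ (π / 4) with hθ₁ | hθ₁
  · exact exists_directionAngles_bracket_of_mem_Icc_pi_div_four hn ⟨hθ.1, hθ₁⟩
  · obtain ⟨α, hα, β, hβ, hαθ, hθβ, hαβ⟩ :=
      exists_directionAngles_bracket_of_mem_Icc_pi_div_four hn (θ := π / 2 - θ)
        ⟨by linarith [hθ.2], by linarith⟩
    exact ⟨π / 2 - β, pi_div_two_sub_mem_directionAngles hβ, π / 2 - α,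
      pi_div_two_sub_mem_directionAngles hα, by linarith, by linarith, by linarith⟩

theorem exists_directionAngles_bracket (hn : 0 < n) (θ : ℝ) :
    ∃ α ∈ directionAngles n, ∃ β ∈ directionAngles n,
      α ≤ θ ∧ θ ≤ β ∧ β - α ≤ arctan (1 / n) := by
  have hpi : 0 < π / 2 := by positivity
  obtain ⟨α, hα, β, hβ, hαθ, hθβ, hαβ⟩ := exists_directionAngles_bracket_of_mem_Icc_pi_div_two hn
    ⟨Int.sub_floor_div_mul_nonneg θ hpi, (Int.sub_floor_div_mul_lt θ hpi).le⟩
  have hper := (directionAngles_periodic n).int_mul ⌊θ / (π / 2)⌋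
  exact ⟨α + ⌊θ / (π / 2)⌋ * (π / 2), (hper α).mpr hα, β + ⌊θ / (π / 2)⌋ * (π / 2), (hper β).mpr hβ,
    by linarith, by linarith, by linarith⟩

theorem sub_le_arctan_of_Ioo_inter_directionAngles_eq_empty (hn : 0 < n) {a b : ℝ}
    (h : Ioo a b ∩ directionAngles n = ∅) : b - a ≤ arctan (1 / n) := by
  rcases le_or_gt b a with hba | hab
  · linarith [arctan_nonneg.2 (by positivity : (0 : ℝ) ≤ 1 / n)]
  obtain ⟨α, hα, β, hβ, hαθ, hθβ, hαβ⟩ := exists_directionAngles_bracket hn ((a + b) / 2)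
  have hαa : α ≤ a := not_lt.1 fun haα =>
    (eq_empty_iff_forall_notMem.1 h α) ⟨⟨haα, by linarith⟩, hα⟩
  have hbβ : b ≤ β := not_lt.1 fun hβb =>
    (eq_empty_iff_forall_notMem.1 h β) ⟨⟨by linarith, hβb⟩, hβ⟩
  linarith

end directionAngles

/-- the set of angles of directions `k/‖k‖₂` of integer vectors `k` with
`|k|_max = n` cuts the circle into arcs, the longest of which has length exactly
`arcsin(1/√(n²+1))`, and `arcsin(1/√(n²+1)) < 1/n`. We formalize: (i) there is a gap of
length exactly `arcsin(1/√(n²+1))` between consecutive directions; (ii) any open interval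
of angles avoiding all such directions has length at most `arcsin(1/√(n²+1))`;
(iii) `arcsin(1/√(n²+1)) < 1/n`. -/
theorem stmt_16 (n : ℕ) (hn : 1 ≤ n)
    (D : Set ℝ)
    (hD : D = {θ : ℝ | ∃ k : ℤ × ℤ, max |k.1| |k.2| = (n : ℤ) ∧
      Real.cos θ = (k.1 : ℝ) / Real.sqrt ((k.1 : ℝ) ^ 2 + (k.2 : ℝ) ^ 2) ∧
      Real.sin θ = (k.2 : ℝ) / Real.sqrt ((k.1 : ℝ) ^ 2 + (k.2 : ℝ) ^ 2)}) :
    (∃ ψ₁ ψ₂ : ℝ, ψ₁ ∈ D ∧ ψ₂ ∈ D ∧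
      ψ₂ - ψ₁ = Real.arcsin (1 / Real.sqrt ((n : ℝ) ^ 2 + 1)) ∧
      ∀ ψ ∈ Set.Ioo ψ₁ ψ₂, ψ ∉ D) ∧
    (∀ a b : ℝ, Set.Ioo a b ∩ D = ∅ → b - a ≤ Real.arcsin (1 / Real.sqrt ((n : ℝ) ^ 2 + 1))) ∧
    Real.arcsin (1 / Real.sqrt ((n : ℝ) ^ 2 + 1)) < 1 / n := by
  obtain rfl : D = directionAngles n := hD
  rw [arcsin_one_div_sqrt_sq_add_one (Nat.cast_pos.2 hn)]
  refine ⟨⟨0, arctan (1 / n), ?_, ?_, sub_zero _, fun ψ => notMem_directionAngles_of_mem_Ioo⟩,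
    fun a b => sub_le_arctan_of_Ioo_inter_directionAngles_eq_empty hn,
    arctan_lt_self (by positivity)⟩
  · simpa using arctan_div_mem_directionAngles hn (Nat.zero_le n)
  · simpa using arctan_div_mem_directionAngles hn hn
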